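/- arXiv:2501.11947 — 2 statements merged into one kernel-verified Lean document; each statement's English description precedes it below -/
import Mathlib

section
/- Let E : (0,∞) → ℝ be a continuous, strictly increasing, coercive scale function. Then the map sending a symmetric positive-definite 3×3 matrix C with spectral decomposition C = Σₐ λₐ² Mₐ to the generalized strain Σₐ E(λₐ) Mₐ is a bijection from the set of symmetric positive-definite matrices onto the set of symmetric matrices. -/
/-!
Fix an orthonormal frame `N`. Then `c ↦ Σₐ cₐ (Nₐ ⊗ Nₐ)` is an algebra homomorphism
`ℝⁿ → Mₙ(ℝ)`, so a polynomial `p` maps such a sum to `Σₐ p(cₐ) (Nₐ ⊗ Nₐ)`. Interpolating any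
`f : ℝ → ℝ` by a polynomial on the finitely many coefficients involved shows that
`Σₐ f(cₐ) (Nₐ ⊗ Nₐ)` depends only on the matrix `Σₐ cₐ (Nₐ ⊗ Nₐ)`, not on its decomposition.
With `f = E ∘ √` and `f = (E⁻¹)²` this gives uniqueness in both directions. Existence comes from
the spectral theorem, and, for the inverse map, from `E` mapping `(0, ∞)` onto `ℝ` (intermediate
value theorem and coerciveness).
-/

open Matrix Filter

/-- `W` is the generalized strain (with scale function `E`) of the symmetric
positive-definite matrix `C = Σₐ λₐ² Mₐ`, i.e. `W = Σₐ E(λₐ) Mₐ` for a common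
spectral decomposition with orthonormal eigenvectors. -/
def IsGenStrainOf (E : ℝ → ℝ) (C W : Matrix (Fin 3) (Fin 3) ℝ) : Prop :=
  ∃ (l : Fin 3 → ℝ) (N : Fin 3 → (Fin 3 → ℝ)),
    (∀ a, 0 < l a) ∧
    (∀ a b, dotProduct (N a) (N b) = if a = b then 1 else 0) ∧
    C = ∑ a, (l a) ^ 2 • Matrix.vecMulVec (N a) (N a) ∧
    W = ∑ a, E (l a) • Matrix.vecMulVec (N a) (N a)

section SpectralSum

variable {n : Type*} [Fintype n]

def IsOrthonormalFrame [DecidableEq n] (N : n → n → ℝ) : Prop :=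
  ∀ a b, N a ⬝ᵥ N b = if a = b then 1 else 0

def spectralSum (c : n → ℝ) (N : n → n → ℝ) : Matrix n n ℝ :=
  ∑ a, c a • vecMulVec (N a) (N a)

lemma isSymm_spectralSum (c : n → ℝ) (N : n → n → ℝ) : (spectralSum c N).IsSymm := by
  simp [Matrix.IsSymm, spectralSum, transpose_sum, transpose_smul, transpose_vecMulVec]

lemma dotProduct_mulVec_spectralSum (c : n → ℝ) (N : n → n → ℝ) (x : n → ℝ) :
    x ⬝ᵥ (spectralSum c N *ᵥ x) = ∑ a, c a * (N a ⬝ᵥ x) ^ 2 := by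
  simp only [spectralSum, sum_mulVec, smul_mulVec, vecMulVec_mulVec, dotProduct_sum,
    dotProduct_smul, op_smul_eq_smul, smul_eq_mul, dotProduct_comm x (N _), sq]

variable [DecidableEq n]

namespace IsOrthonormalFrame

variable {N : n → n → ℝ} (hN : IsOrthonormalFrame N)
include hN

lemma sum_vecMulVec_self : ∑ a, vecMulVec (N a) (N a) = 1 := by
  have hrows : of N * (of N)ᵀ = 1 := by
    ext a b
    simpa [mul_apply, dotProduct, one_apply] using hN a b
  rw [← mul_eq_one_comm.mp hrows]
  ext i j
  simp [mul_apply, Matrix.sum_apply, vecMulVec_apply]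

lemma spectralSum_one : spectralSum 1 N = 1 := by
  simpa [spectralSum] using hN.sum_vecMulVec_self

lemma vecMulVec_self_mul_vecMulVec_self (a b : n) :
    vecMulVec (N a) (N a) * vecMulVec (N b) (N b) =
      if a = b then vecMulVec (N a) (N a) else 0 := by
  rw [vecMulVec_mul_vecMulVec, hN]
  split_ifs with h <;> simp [h]

lemma spectralSum_mul (c d : n → ℝ) :
    spectralSum c N * spectralSum d N = spectralSum (c * d) N := by
  simp [spectralSum, Finset.sum_mul_sum, hN.vecMulVec_self_mul_vecMulVec_self, smul_smul,
    mul_comm]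

def spectralAlgHom : (n → ℝ) →ₐ[ℝ] Matrix n n ℝ :=
  AlgHom.ofLinearMap (Fintype.linearCombination ℝ fun a => vecMulVec (N a) (N a))
    (by rw [Fintype.linearCombination_apply]; exact hN.spectralSum_one)
    fun c d => by
      simp only [Fintype.linearCombination_apply]
      exact (hN.spectralSum_mul c d).symm

lemma aeval_spectralSum (p : Polynomial ℝ) (c : n → ℝ) :
    Polynomial.aeval (spectralSum c N) p = spectralSum (fun a => p.eval (c a)) N := by
  have h : ∀ d, (spectralAlgHom hN) d = spectralSum d N := fun d =>
    Fintype.linearCombination_apply ℝ _ d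
  rw [← h, ← h, Polynomial.aeval_algHom_apply, Polynomial.aeval_pi_apply]
  simp

lemma eq_zero_of_forall_dotProduct_eq_zero {x : n → ℝ} (hx : ∀ a, N a ⬝ᵥ x = 0) : x = 0 := by
  rw [← one_mulVec x, ← hN.sum_vecMulVec_self, sum_mulVec]
  simp [vecMulVec_mulVec, hx]

lemma posDef_spectralSum_iff {c : n → ℝ} : (spectralSum c N).PosDef ↔ ∀ a, 0 < c a := by
  rw [posDef_iff_dotProduct_mulVec, isHermitian_iff_isSymm]
  simp only [star_trivial, dotProduct_mulVec_spectralSum]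
  refine ⟨fun h a => ?_, fun hc => ⟨isSymm_spectralSum c N, fun x hx => ?_⟩⟩
  · have hNa : N a ≠ 0 := fun h0 => by simpa [h0] using hN a a
    simpa [hN _ _] using h.2 hNa
  · obtain ⟨a, ha⟩ : ∃ a, N a ⬝ᵥ x ≠ 0 := by
      by_contra! h
      exact hx (hN.eq_zero_of_forall_dotProduct_eq_zero h)
    exact Finset.sum_pos' (fun b _ => by have := hc b; positivity)
      ⟨a, Finset.mem_univ a, by have := hc a; positivity⟩

end IsOrthonormalFrame

theorem spectralSum_comp_eq_of_eq (f : ℝ → ℝ) {c c' : n → ℝ} {N N' : n → n → ℝ}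
    (hN : IsOrthonormalFrame N) (hN' : IsOrthonormalFrame N')
    (h : spectralSum c N = spectralSum c' N') :
    spectralSum (f ∘ c) N = spectralSum (f ∘ c') N' := by
  classical
  set S := Finset.univ.image c ∪ Finset.univ.image c'
  set p := Lagrange.interpolate S id f
  have hp : ∀ x ∈ S, p.eval x = f x := fun x hx =>
    Lagrange.eval_interpolate_at_node f (Set.injOn_id _) hx
  have hc : f ∘ c = fun a => p.eval (c a) := funext fun a => (hp _ (by simp [S])).symm
  have hc' : f ∘ c' = fun a => p.eval (c' a) := funext fun a => (hp _ (by simp [S])).symm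
  rw [hc, hc', ← hN.aeval_spectralSum, ← hN'.aeval_spectralSum, h]

theorem Matrix.IsSymm.exists_spectralSum_eq {A : Matrix n n ℝ} (hA : A.IsSymm) :
    ∃ (μ : n → ℝ) (N : n → n → ℝ), IsOrthonormalFrame N ∧ spectralSum μ N = A := by
  have hH : A.IsHermitian := isHermitian_iff_isSymm.2 hA
  set N : n → n → ℝ := fun a => hH.eigenvectorBasis a
  have hN : IsOrthonormalFrame N := fun a b => by
    simpa [EuclideanSpace.inner_eq_star_dotProduct, dotProduct_comm, N] using
      orthonormal_iff_ite.1 hH.eigenvectorBasis.orthonormal a b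
  refine ⟨hH.eigenvalues, N, hN, ?_⟩
  calc spectralSum hH.eigenvalues N = ∑ a, vecMulVec (A *ᵥ N a) (N a) := by
        simp [spectralSum, N, hH.mulVec_eigenvectorBasis, smul_vecMulVec]
    _ = A * ∑ a, vecMulVec (N a) (N a) := by simp [Finset.mul_sum, mul_vecMulVec]
    _ = A := by rw [hN.sum_vecMulVec_self, mul_one]

end SpectralSum

namespace IsGenStrainOf

variable {E : ℝ → ℝ} {C C' W W' : Matrix (Fin 3) (Fin 3) ℝ}

lemma isSymm_left (h : IsGenStrainOf E C W) : C.IsSymm := by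
  obtain ⟨l, N, -, -, rfl, -⟩ := h
  exact isSymm_spectralSum (fun a => l a ^ 2) N

lemma isSymm_right (h : IsGenStrainOf E C W) : W.IsSymm := by
  obtain ⟨l, N, -, -, -, rfl⟩ := h
  exact isSymm_spectralSum (E ∘ l) N

lemma posDef_left (h : IsGenStrainOf E C W) : C.PosDef := by
  obtain ⟨l, N, hl, hN : IsOrthonormalFrame N, rfl, -⟩ := h
  exact hN.posDef_spectralSum_iff.2 fun a => pow_pos (hl a) 2

lemma right_unique (h : IsGenStrainOf E C W) (h' : IsGenStrainOf E C W') : W = W' := by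
  obtain ⟨l, N, hl, hN : IsOrthonormalFrame N, hC, rfl⟩ := h
  obtain ⟨l', N', hl', hN' : IsOrthonormalFrame N', hC', rfl⟩ := h'
  have hE : ∀ l : Fin 3 → ℝ, (∀ a, 0 < l a) → E ∘ l = (E ∘ Real.sqrt) ∘ fun a => l a ^ 2 :=
    fun l hl => funext fun a => by simp [Real.sqrt_sq (hl a).le]
  change spectralSum (E ∘ l) N = spectralSum (E ∘ l') N'
  rw [hE l hl, hE l' hl']
  exact spectralSum_comp_eq_of_eq _ hN hN' (hC.symm.trans hC')

lemma left_unique (hE : Set.InjOn E (Set.Ioi 0)) (h : IsGenStrainOf E C W)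
    (h' : IsGenStrainOf E C' W) : C = C' := by
  obtain ⟨l, N, hl, hN : IsOrthonormalFrame N, rfl, hW⟩ := h
  obtain ⟨l', N', hl', hN' : IsOrthonormalFrame N', rfl, hW'⟩ := h'
  have hsq : ∀ l : Fin 3 → ℝ, (∀ a, 0 < l a) →
      (fun a => l a ^ 2) = (fun y => Function.invFunOn E (Set.Ioi 0) y ^ 2) ∘ E ∘ l :=
    fun l hl => funext fun a => by simp [hE.leftInvOn_invFunOn (hl a)]
  change spectralSum (fun a => l a ^ 2) N = spectralSum (fun a => l' a ^ 2) N'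
  rw [hsq l hl, hsq l' hl']
  exact spectralSum_comp_eq_of_eq _ hN hN' (hW.symm.trans hW')

end IsGenStrainOf

lemma exists_isGenStrainOf_of_posDef (E : ℝ → ℝ) {C : Matrix (Fin 3) (Fin 3) ℝ} (hCs : C.IsSymm)
    (hC : C.PosDef) : ∃ W, IsGenStrainOf E C W := by
  obtain ⟨μ, N, hN, rfl⟩ := hCs.exists_spectralSum_eq
  have hμ := hN.posDef_spectralSum_iff.1 hC
  refine ⟨spectralSum (E ∘ fun a => √(μ a)) N, fun a => √(μ a), N,
    fun a => Real.sqrt_pos.2 (hμ a), hN, ?_, rfl⟩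
  simp [spectralSum, Real.sq_sqrt (hμ _).le]

lemma exists_isGenStrainOf_of_surjOn {E : ℝ → ℝ} (hE : Set.SurjOn E (Set.Ioi 0) Set.univ)
    {W : Matrix (Fin 3) (Fin 3) ℝ} (hW : W.IsSymm) : ∃ C, IsGenStrainOf E C W := by
  obtain ⟨μ, N, hN, rfl⟩ := hW.exists_spectralSum_eq
  choose l hl hlμ using fun a => hE (Set.mem_univ (μ a))
  exact ⟨spectralSum (fun a => l a ^ 2) N, l, N, hl, hN, rfl, by simp [spectralSum, hlμ]⟩

/-- For a continuous, strictly increasing, coercive scale function `E`, the generalized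
strain map is a bijection from the symmetric positive-definite 3×3 matrices onto the
symmetric 3×3 matrices: every symmetric positive-definite `C` has a unique symmetric
generalized strain `W`, and every symmetric `W` arises from a unique symmetric
positive-definite `C`. -/
theorem genStrain_bijective
    (E : ℝ → ℝ)
    (hcont : ContinuousOn E (Set.Ioi 0))
    (hmono : StrictMonoOn E (Set.Ioi 0))
    (hbot : Tendsto E (nhdsWithin 0 (Set.Ioi 0)) atBot)
    (htop : Tendsto E atTop atTop) :
    (∀ C : Matrix (Fin 3) (Fin 3) ℝ, C.IsSymm → C.PosDef →
      ∃! W : Matrix (Fin 3) (Fin 3) ℝ, W.IsSymm ∧ IsGenStrainOf E C W) ∧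
    (∀ W : Matrix (Fin 3) (Fin 3) ℝ, W.IsSymm →
      ∃! C : Matrix (Fin 3) (Fin 3) ℝ, (C.IsSymm ∧ C.PosDef) ∧ IsGenStrainOf E C W) := by
  have hsurj : Set.SurjOn E (Set.Ioi 0) Set.univ :=
    hcont.surjOn_of_tendsto Set.nonempty_Ioi ((tendsto_comp_coe_Ioi_atBot (a := 0)).2 hbot)
      (tendsto_comp_val_Ioi_atTop.2 htop)
  refine ⟨fun C hCs hC => ?_, fun W hW => ?_⟩
  · obtain ⟨W, hCW⟩ := exists_isGenStrainOf_of_posDef E hCs hC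
    exact ⟨W, ⟨hCW.isSymm_right, hCW⟩, fun W' hW' => hW'.2.right_unique hCW⟩
  · obtain ⟨C, hCW⟩ := exists_isGenStrainOf_of_surjOn hsurj hW
    exact ⟨C, ⟨⟨hCW.isSymm_left, hCW.posDef_left⟩, hCW⟩,
      fun C' hC' => hC'.2.left_unique hmono.injOn hCW⟩
end

section
/- For the Simo-Taylor volumetric energy Ψ_vol(J) = (κ/4)(J² - 2 ln J - 1) with κ > 0, the minimizer of J ↦ Ψ_vol(J) + PJ over J > 0 is J* = (√(P² + κ²) - P)/κ, and d/dP of the resulting G_vol(P) equals J*, so the isothermal compressibility factor β := (dρ/dP)/ρ with ρ = ρ₀/J* equals (P² + κ²)^{-1/2}. -/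
/-- The minimizer `J*(P) = (√(P² + κ²) - P)/κ` of the Simo-Taylor functional. -/
noncomputable def Jstar (κ P : ℝ) : ℝ := (Real.sqrt (P ^ 2 + κ ^ 2) - P) / κ

/-!
`J*` is the positive root of `κ J² + 2 P J - κ = 0`, i.e. of the stationarity condition
`Ψ_vol'(J) + P = (κ/2)(J - 1/J) + P = 0`. Since `Ψ_vol` is convex on `(0, ∞)` this root is the
minimizer, and by the envelope theorem `G_vol' = J*`. Implicit differentiation of the quadratic
gives `dJ*/dP = -J*/√(P² + κ²)`, so the logarithmic derivative of `ρ = ρ₀/J*` is `1/√(P² + κ²)`.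
-/

open Real

noncomputable def simoTaylorVol (κ J : ℝ) : ℝ := κ / 4 * (J ^ 2 - 2 * log J - 1)

theorem hasDerivAt_simoTaylorVol (κ : ℝ) {J : ℝ} (hJ : J ≠ 0) :
    HasDerivAt (simoTaylorVol κ) (κ / 2 * (J - J⁻¹)) J := by
  refine ((((hasDerivAt_pow 2 J).sub ((hasDerivAt_log hJ).const_mul 2)).sub_const 1).const_mul
    (κ / 4)).congr_deriv ?_
  norm_num
  ring

theorem simoTaylorVol_add_mul_le {κ P J₀ J : ℝ} (hκ : 0 ≤ κ) (hJ₀ : 0 < J₀) (hJ : 0 < J)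
    (hstat : κ / 2 * (J₀ - J₀⁻¹) + P = 0) :
    simoTaylorVol κ J₀ + P * J₀ ≤ simoTaylorVol κ J + P * J := by
  have hlog : log J - log J₀ ≤ J / J₀ - 1 := by
    simpa only [log_div hJ.ne' hJ₀.ne'] using log_le_sub_one_of_pos (div_pos hJ hJ₀)
  have hP : P = -(κ / 2 * (J₀ - J₀⁻¹)) := by linarith
  -- the tangent-line bound for `-log` turns the gap into `κ/4 (J - J₀)²`
  have hgap : simoTaylorVol κ J + P * J - (simoTaylorVol κ J₀ + P * J₀)
      = κ / 4 * (J - J₀) ^ 2 + κ / 2 * ((J / J₀ - 1) - (log J - log J₀)) := by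
    rw [simoTaylorVol, simoTaylorVol, hP]
    field_simp
    ring
  have : 0 ≤ κ / 4 * (J - J₀) ^ 2 + κ / 2 * ((J / J₀ - 1) - (log J - log J₀)) := by
    have := sub_nonneg.mpr hlog
    positivity
  linarith

/-- Envelope theorem. -/
theorem hasDerivAt_comp_add_mul_of_stationary {ψ j : ℝ → ℝ} {ψ' j' p : ℝ}
    (hψ : HasDerivAt ψ ψ' (j p)) (hj : HasDerivAt j j' p) (hstat : ψ' + p = 0) :
    HasDerivAt (fun q => ψ (j q) + q * j q) (j p) p := by
  refine ((hψ.comp p hj).add ((hasDerivAt_id p).mul hj)).congr_deriv ?_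
  simp only [id]
  linear_combination j' * hstat

theorem exists_hasDerivAt_const_div_and_div_eq {j : ℝ → ℝ} {j' p ρ₀ : ℝ} (hj : HasDerivAt j j' p)
    (hjp : j p ≠ 0) (hρ₀ : ρ₀ ≠ 0) :
    ∃ d, HasDerivAt (fun q => ρ₀ / j q) d p ∧ d / (ρ₀ / j p) = -j' / j p := by
  refine ⟨_, (hasDerivAt_const p ρ₀).div hj hjp, ?_⟩
  field_simp
  ring

theorem sq_sqrt_sq_add_sq (P κ : ℝ) : sqrt (P ^ 2 + κ ^ 2) ^ 2 = P ^ 2 + κ ^ 2 :=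
  sq_sqrt (by positivity)

section Jstar

variable {κ : ℝ} (P : ℝ)

theorem sqrt_sq_add_sq_pos (hκ : κ ≠ 0) : 0 < sqrt (P ^ 2 + κ ^ 2) :=
  sqrt_pos.mpr (by positivity)

theorem Jstar_pos (hκ : 0 < κ) : 0 < Jstar κ P := by
  have : P < sqrt (P ^ 2 + κ ^ 2) := lt_sqrt_of_sq_lt (by nlinarith)
  exact div_pos (by linarith) hκ

theorem Jstar_quadratic (hκ : κ ≠ 0) : κ * Jstar κ P ^ 2 + 2 * P * Jstar κ P - κ = 0 := by
  rw [Jstar]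
  field_simp
  linear_combination sq_sqrt_sq_add_sq P κ

theorem Jstar_stationary (hκ : 0 < κ) : κ / 2 * (Jstar κ P - (Jstar κ P)⁻¹) + P = 0 := by
  have hJ := (Jstar_pos P hκ).ne'
  field_simp
  linear_combination Jstar_quadratic P hκ.ne'

theorem hasDerivAt_Jstar (hκ : κ ≠ 0) :
    HasDerivAt (Jstar κ) (-Jstar κ P / sqrt (P ^ 2 + κ ^ 2)) P := by
  have hs := sqrt_sq_add_sq_pos P hκ
  have hsq : HasDerivAt (fun q : ℝ => q ^ 2 + κ ^ 2) (2 * P) P := by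
    simpa using (hasDerivAt_pow 2 P).add_const (κ ^ 2)
  have hsqrt := hsq.sqrt (by positivity)
  refine ((hsqrt.sub (hasDerivAt_id P)).div_const κ).congr_deriv ?_
  rw [Jstar]
  field_simp
  ring

end Jstar

/-- For the Simo-Taylor volumetric energy `Ψ_vol(J) = (κ/4)(J² - 2 ln J - 1)` with `κ > 0`,
the minimizer of `J ↦ Ψ_vol(J) + PJ` over `J > 0` is `J* = (√(P² + κ²) - P)/κ`, the
derivative of the resulting `G_vol(P)` equals `J*`, and the isothermal compressibility
factor `β = (dρ/dP)/ρ` with `ρ = ρ₀/J*` equals `(P² + κ²)^{-1/2}`. -/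
theorem simoTaylor_vol_gibbs (κ P ρ₀ : ℝ) (hκ : 0 < κ) (hρ₀ : 0 < ρ₀) :
    0 < Jstar κ P ∧
    (∀ J : ℝ, 0 < J →
      κ / 4 * ((Jstar κ P) ^ 2 - 2 * Real.log (Jstar κ P) - 1) + P * Jstar κ P
        ≤ κ / 4 * (J ^ 2 - 2 * Real.log J - 1) + P * J) ∧
    HasDerivAt
      (fun q => κ / 4 * ((Jstar κ q) ^ 2 - 2 * Real.log (Jstar κ q) - 1) + q * Jstar κ q)
      (Jstar κ P) P ∧
    (∃ d : ℝ, HasDerivAt (fun q => ρ₀ / Jstar κ q) d P ∧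
      d / (ρ₀ / Jstar κ P) = 1 / Real.sqrt (P ^ 2 + κ ^ 2)) := by
  have hJ := Jstar_pos P hκ
  have hstat := Jstar_stationary P hκ
  have hJ' := hasDerivAt_Jstar P hκ.ne'
  refine ⟨hJ, fun J hJpos => simoTaylorVol_add_mul_le hκ.le hJ hJpos hstat,
    hasDerivAt_comp_add_mul_of_stationary (hasDerivAt_simoTaylorVol κ hJ.ne') hJ' hstat, ?_⟩
  obtain ⟨d, hd, hβ⟩ := exists_hasDerivAt_const_div_and_div_eq hJ' hJ.ne' hρ₀.ne'
  refine ⟨d, hd, ?_⟩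
  rw [hβ]
  field_simp
end
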